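/- arXiv:2409.15906 — 3 statements merged into one kernel-verified Lean document; each statement's English description precedes it below -/
import Mathlib

section
/- Let A be an m×K real matrix and π a probability on {1,...,m} with π(i) ≥ β‖A_{i,:}‖₂²/‖A‖_F² for β ∈ (0,1]. With X = A_{i,:}ᵀA_{i,:}/π(i), i ∼ π, the variance satisfies E[‖X − AᵀA‖_F²] ≤ β⁻¹‖A‖_F⁴. -/
open Matrix Finset

noncomputable section

/-- Squared Frobenius norm of a matrix. -/
def frobSq {ι κ : Type*} [Fintype ι] [Fintype κ] (A : Matrix ι κ ℝ) : ℝ :=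
  ∑ i, ∑ j, (A i j) ^ 2

/-- Squared Euclidean norm of the `i`-th row of `A`. -/
def rowSq {m K : ℕ} (A : Matrix (Fin m) (Fin K) ℝ) (i : Fin m) : ℝ := ∑ j, (A i j) ^ 2

lemma frob_expand {K : ℕ} (c : ℝ) (v : Fin K → ℝ) (S : Matrix (Fin K) (Fin K) ℝ) :
    frobSq (c • vecMulVec v v - S)
      = c ^ 2 * (∑ j, v j ^ 2) ^ 2
        - 2 * c * (∑ j, ∑ k, v j * v k * S j k) + frobSq S := by
  unfold frobSq vecMulVec
  have h1 : ∀ j k : Fin K, (c • (Matrix.of fun j k => v j * v k) - S) j k ^ 2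
      = c ^ 2 * (v j ^ 2 * v k ^ 2) - 2 * c * (v j * v k * S j k) + S j k ^ 2 := by
    intro j k
    simp only [Matrix.sub_apply, Matrix.smul_apply, Matrix.of_apply, smul_eq_mul]
    ring
  calc (∑ j, ∑ k, (c • (Matrix.of fun j k => v j * v k) - S) j k ^ 2)
      = ∑ j, ∑ k, (c ^ 2 * (v j ^ 2 * v k ^ 2) - 2 * c * (v j * v k * S j k)
          + S j k ^ 2) := by
        exact Finset.sum_congr rfl fun j _ => Finset.sum_congr rfl fun k _ => h1 j k
    _ = c ^ 2 * (∑ j, ∑ k, v j ^ 2 * v k ^ 2)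
          - 2 * c * (∑ j, ∑ k, v j * v k * S j k) + ∑ j, ∑ k, S j k ^ 2 := by
        simp only [Finset.sum_add_distrib, Finset.sum_sub_distrib, Finset.mul_sum]
    _ = c ^ 2 * (∑ j, v j ^ 2) ^ 2
          - 2 * c * (∑ j, ∑ k, v j * v k * S j k) + ∑ j, ∑ k, S j k ^ 2 := by
        rw [sq (∑ j, v j ^ 2), Finset.sum_mul_sum]

/-- Row sampling with approximately optimal probabilities
`π(i) ≥ β ‖A_{i,:}‖₂²/‖A‖_F²`: the estimator `X = A_{i,:}ᵀ A_{i,:} / π(i)`, `i ∼ π`,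
has variance `E[‖X − AᵀA‖_F²] ≤ β⁻¹ ‖A‖_F⁴`. -/
theorem stmt2 {m K : ℕ} (A : Matrix (Fin m) (Fin K) ℝ)
    (π : Fin m → ℝ) (β : ℝ) (hβ : β ∈ Set.Ioc (0 : ℝ) 1)
    (hπnn : ∀ i, 0 ≤ π i) (hπsum : ∑ i, π i = 1)
    (hdom : ∀ i, β * rowSq A i / frobSq A ≤ π i) :
    ∑ i, π i * frobSq ((π i)⁻¹ • vecMulVec (A i) (A i) - Aᵀ * A)
      ≤ β⁻¹ * (frobSq A) ^ 2 := by
  obtain ⟨hβ0, hβ1⟩ := hβ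
  set S := Aᵀ * A with hS
  set F := frobSq A with hFdef
  have hF : F = ∑ i, rowSq A i := rfl
  have hrow_nn : ∀ i, 0 ≤ rowSq A i := fun i =>
    Finset.sum_nonneg fun _ _ => sq_nonneg _
  have hF_nn : 0 ≤ F := by
    rw [hF]; exact Finset.sum_nonneg fun i _ => hrow_nn i
  have hSfrob_nn : 0 ≤ frobSq S :=
    Finset.sum_nonneg fun _ _ => Finset.sum_nonneg fun _ _ => sq_nonneg _
  have hrow_le_F : ∀ i, rowSq A i ≤ F := by
    intro i
    rw [hF]
    exact Finset.single_le_sum (fun j _ => hrow_nn j) (Finset.mem_univ i)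
  -- π i = 0 forces the row to vanish
  have hzero : ∀ i, π i = 0 → rowSq A i = 0 := by
    intro i h0
    have hd := hdom i
    rw [h0] at hd
    rcases eq_or_lt_of_le hF_nn with hF0 | hFpos
    · exact le_antisymm (by rw [← hF0] at hrow_le_F; exact hrow_le_F i) (hrow_nn i)
    · have : β * rowSq A i ≤ 0 := by
        have := (div_nonpos_iff.mp hd)
        rcases this with ⟨h1, h2⟩ | ⟨h1, h2⟩
        · exact absurd (lt_of_lt_of_le hFpos h2) (by simp)
        · exact h1
      nlinarith [hrow_nn i]
  have hzero' : ∀ i, π i = 0 → ∀ j, A i j = 0 := by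
    intro i h0 j
    have h := hzero i h0
    have := Finset.sum_eq_zero_iff_of_nonneg (fun k (_ : k ∈ Finset.univ) =>
      sq_nonneg (A i k)) |>.mp h j (Finset.mem_univ j)
    exact pow_eq_zero_iff (n := 2) (by norm_num) |>.mp this
  -- inner product of i-th outer product with S
  set ip : Fin m → ℝ := fun i => ∑ j, ∑ k, A i j * A i k * S j k with hip
  have hip_zero : ∀ i, π i = 0 → ip i = 0 := by
    intro i h0
    simp [hip, hzero' i h0]
  have hip_sum : ∑ i, ip i = frobSq S := by
    rw [hip]
    rw [Finset.sum_comm]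
    unfold frobSq
    refine Finset.sum_congr rfl fun j _ => ?_
    rw [Finset.sum_comm]
    refine Finset.sum_congr rfl fun k _ => ?_
    have hSjk : S j k = ∑ i, A i j * A i k := by
      simp [hS, Matrix.mul_apply, Matrix.transpose_apply]
    rw [sq, ← Finset.sum_mul, ← hSjk]
  -- rewrite each term
  have hsum_eq : ∑ i, π i * frobSq ((π i)⁻¹ • vecMulVec (A i) (A i) - S)
      = ∑ i, ((π i)⁻¹ * (rowSq A i) ^ 2 - 2 * (π i * (π i)⁻¹) * ip i
          + π i * frobSq S) := by
    refine Finset.sum_congr rfl fun i _ => ?_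
    rw [frob_expand]
    rcases eq_or_ne (π i) 0 with h0 | h0
    · simp [h0, hip_zero i h0]
    · simp only [hip]
      have hrw : rowSq A i = ∑ j, A i j ^ 2 := rfl
      rw [hrw]
      field_simp
  rw [hsum_eq]
  have hsplit : ∑ i, ((π i)⁻¹ * (rowSq A i) ^ 2 - 2 * (π i * (π i)⁻¹) * ip i
      + π i * frobSq S)
      = (∑ i, (π i)⁻¹ * (rowSq A i) ^ 2) - 2 * (∑ i, π i * (π i)⁻¹ * ip i)
        + (∑ i, π i) * frobSq S := by
    rw [Finset.sum_add_distrib, Finset.sum_sub_distrib, ← Finset.sum_mul,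
      Finset.mul_sum]
    congr 1
    congr 1
    exact Finset.sum_congr rfl fun i _ => by ring
  rw [hsplit, hπsum, one_mul]
  have hmid : ∑ i, π i * (π i)⁻¹ * ip i = frobSq S := by
    rw [← hip_sum]
    refine Finset.sum_congr rfl fun i _ => ?_
    rcases eq_or_ne (π i) 0 with h0 | h0
    · rw [hip_zero i h0, h0]; ring
    · rw [mul_inv_cancel₀ h0, one_mul]
  rw [hmid]
  have hmain : ∑ i, (π i)⁻¹ * (rowSq A i) ^ 2 ≤ β⁻¹ * F ^ 2 := by
    have hterm : ∀ i, (π i)⁻¹ * (rowSq A i) ^ 2 ≤ β⁻¹ * F * rowSq A i := by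
      intro i
      rcases eq_or_lt_of_le (hrow_nn i) with hr0 | hrpos
      · rw [← hr0]
        simp
      · have hFpos : 0 < F := lt_of_lt_of_le hrpos (hrow_le_F i)
        have hlb : 0 < β * rowSq A i / F := by positivity
        have hπpos : 0 < π i := lt_of_lt_of_le hlb (hdom i)
        have hinv : (π i)⁻¹ ≤ (β * rowSq A i / F)⁻¹ :=
          inv_anti₀ hlb (hdom i)
        have := mul_le_mul_of_nonneg_right hinv (sq_nonneg (rowSq A i))
        calc (π i)⁻¹ * (rowSq A i) ^ 2 ≤ (β * rowSq A i / F)⁻¹ * (rowSq A i) ^ 2 :=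
              this
          _ = β⁻¹ * F * rowSq A i := by
              field_simp
    calc ∑ i, (π i)⁻¹ * (rowSq A i) ^ 2 ≤ ∑ i, β⁻¹ * F * rowSq A i :=
          Finset.sum_le_sum fun i _ => hterm i
      _ = β⁻¹ * F * ∑ i, rowSq A i := by rw [← Finset.mul_sum]
      _ = β⁻¹ * F ^ 2 := by rw [← hF]; ring
  linarith

end
end

section
/- Let A be an m×K real matrix, π the exact row-norm distribution π(i) = ‖A_{i,:}‖₂²/‖A‖_F², and C the c×K sketch matrix with rows A_{i_j,:}/√(c·π(i_j)) for i.i.d. draws i_j ∼ π. Then E[‖AᵀA − CᵀC‖_F²] ≤ ‖A‖_F⁴/c. -/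
/-!
Entrywise, `(AᵀA)_{kl} = ∑ᵢ π(i) Y_{kl}(i)` with `Y_{kl}(i) = A_{ik} A_{il} / π(i)`, and
`(CᵀC)_{kl}` is the empirical mean of `Y_{kl}` over the `c` independent draws. The centred
draws are uncorrelated, so the mean square deviation of that empirical mean is
`Var(Y_{kl}) / c ≤ E[Y_{kl}²] / c`. Summing over `k, l` gives `(1/c) ∑ᵢ ‖A_{i,:}‖⁴ / π(i)`, which
for row-norm probabilities is exactly `‖A‖_F⁴ / c`.
-/

open Matrix Finset

noncomputable section

/-- The sketch matrix whose `j`-th row is `A_{f j,:} / √(c π(f j))`. -/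
def sketch {m K : ℕ} (A : Matrix (Fin m) (Fin K) ℝ) (π : Fin m → ℝ) (c : ℕ)
    (f : Fin c → Fin m) : Matrix (Fin c) (Fin K) ℝ :=
  Matrix.of fun j k => A (f j) k / Real.sqrt (c * π (f j))
section IndependentSamples

/- `∑ f : J → ι, (∏ j, π (f j)) * G f` is the expectation of `G` when the coordinates
`f j` are drawn independently from the weights `π`. -/

variable {ι J : Type*} [Fintype ι] [Fintype J] [DecidableEq J] (π : ι → ℝ)

theorem sum_prod_mul_prod_apply (φ : J → ι → ℝ) :
    ∑ f : J → ι, (∏ j, π (f j)) * ∏ j, φ j (f j) = ∏ j, ∑ i, π i * φ j i := by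
  simp_rw [← prod_mul_distrib]
  exact (Fintype.prod_sum fun j i => π i * φ j i).symm

variable {π}

theorem sum_prod_mul_apply (hπ : ∑ i, π i = 1) (g : ι → ℝ) (j₀ : J) :
    ∑ f : J → ι, (∏ j, π (f j)) * g (f j₀) = ∑ i, π i * g i := by
  have h := sum_prod_mul_prod_apply π fun j i => if j = j₀ then g i else 1
  simpa [apply_ite, hπ] using h

theorem sum_prod_mul_apply_mul_apply (hπ : ∑ i, π i = 1) (g h : ι → ℝ) {j₀ j₁ : J}
    (hne : j₀ ≠ j₁) :
    ∑ f : J → ι, (∏ j, π (f j)) * (g (f j₀) * h (f j₁))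
      = (∑ i, π i * g i) * ∑ i, π i * h i := by
  have hprod : ∀ f : J → ι, g (f j₀) * h (f j₁)
      = ∏ j, (if j = j₀ then g (f j) else 1) * (if j = j₁ then h (f j) else 1) := by
    intro f
    simp only [prod_mul_distrib, prod_ite_eq', mem_univ, if_true]
  have hmarg : ∀ j, ∑ i, π i * ((if j = j₀ then g i else 1) * (if j = j₁ then h i else 1))
      = (if j = j₀ then ∑ i, π i * g i else 1) * (if j = j₁ then ∑ i, π i * h i else 1) := by
    intro j
    by_cases h₀ : j = j₀ <;> by_cases h₁ : j = j₁
    · exact absurd (h₀.symm.trans h₁) hne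
    all_goals simp [h₀, h₁, hne, hne.symm, hπ]
  simp_rw [hprod]
  rw [sum_prod_mul_prod_apply π fun j i =>
    (if j = j₀ then g i else 1) * (if j = j₁ then h i else 1)]
  simp only [hmarg, prod_mul_distrib, prod_ite_eq', mem_univ, if_true]

theorem sum_prod_mul_sq_sum_apply (hπ : ∑ i, π i = 1) {Z : ι → ℝ} (hZ : ∑ i, π i * Z i = 0) :
    ∑ f : J → ι, (∏ j, π (f j)) * (∑ j, Z (f j)) ^ 2
      = Fintype.card J * ∑ i, π i * Z i ^ 2 := by
  have hcov : ∀ j₀ j₁ : J, ∑ f : J → ι, (∏ j, π (f j)) * (Z (f j₀) * Z (f j₁))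
      = if j₀ = j₁ then ∑ i, π i * Z i ^ 2 else 0 := by
    intro j₀ j₁
    split_ifs with h
    · subst h
      simp_rw [← sq]
      exact sum_prod_mul_apply hπ (fun i => Z i ^ 2) j₀
    · rw [sum_prod_mul_apply_mul_apply hπ Z Z h, hZ, zero_mul]
  calc ∑ f : J → ι, (∏ j, π (f j)) * (∑ j, Z (f j)) ^ 2
      = ∑ j₀, ∑ j₁, ∑ f : J → ι, (∏ j, π (f j)) * (Z (f j₀) * Z (f j₁)) := by
        simp_rw [sq, sum_mul_sum, mul_sum]
        rw [sum_comm]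
        exact sum_congr rfl fun _ _ => sum_comm
    _ = Fintype.card J * ∑ i, π i * Z i ^ 2 := by simp [hcov]

theorem sum_prod_mul_sq_sub_mean_le (hJ : 0 < Fintype.card J) (hπ : ∑ i, π i = 1) (Y : ι → ℝ) :
    ∑ f : J → ι, (∏ j, π (f j)) * (∑ i, π i * Y i - (∑ j, Y (f j)) / Fintype.card J) ^ 2
      ≤ (∑ i, π i * Y i ^ 2) / Fintype.card J := by
  set μ := ∑ i, π i * Y i
  set n : ℝ := (Fintype.card J : ℝ)
  have hn : 0 < n := Nat.cast_pos.mpr hJ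
  have hcentered : ∑ i, π i * (μ - Y i) = 0 := by
    simp [mul_sub, sum_sub_distrib, ← sum_mul, hπ, μ]
  have hvar : ∑ i, π i * (μ - Y i) ^ 2 = ∑ i, π i * Y i ^ 2 - μ ^ 2 := by
    have : ∀ i, π i * (μ - Y i) ^ 2 = μ ^ 2 * π i - 2 * μ * (π i * Y i) + π i * Y i ^ 2 := by
      intro i; ring
    simp only [this, sum_add_distrib, sum_sub_distrib, ← mul_sum, hπ]
    ring
  have hdev : ∀ f : J → ι, μ - (∑ j, Y (f j)) / n = (∑ j, (μ - Y (f j))) / n := by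
    intro f
    simp only [sum_sub_distrib, sum_const, card_univ, nsmul_eq_mul, n]
    field_simp
  calc ∑ f : J → ι, (∏ j, π (f j)) * (μ - (∑ j, Y (f j)) / n) ^ 2
      = (∑ f : J → ι, (∏ j, π (f j)) * (∑ j, (μ - Y (f j))) ^ 2) / n ^ 2 := by
        simp_rw [hdev, div_pow, mul_div_assoc', sum_div]
    _ = (∑ i, π i * Y i ^ 2 - μ ^ 2) / n := by
        rw [sum_prod_mul_sq_sum_apply hπ hcentered, hvar]
        field_simp
        exact mul_comm _ _
    _ ≤ (∑ i, π i * Y i ^ 2) / n := by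
        gcongr
        exact sub_le_self _ (sq_nonneg μ)

end IndependentSamples

section RowSampling

variable {m K c : ℕ} (A : Matrix (Fin m) (Fin K) ℝ)

theorem rowSq_nonneg (i : Fin m) : 0 ≤ rowSq A i :=
  sum_nonneg fun _ _ => sq_nonneg _

theorem rowSq_eq_zero_iff {i : Fin m} : rowSq A i = 0 ↔ A i = 0 := by
  rw [rowSq, sum_eq_zero_iff_of_nonneg fun j _ => sq_nonneg (A i j), funext_iff]
  simp

theorem frobSq_eq_sum_rowSq : frobSq A = ∑ i, rowSq A i := rfl

theorem frobSq_pos {A : Matrix (Fin m) (Fin K) ℝ} (hA : A ≠ 0) : 0 < frobSq A := by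
  refine (sum_nonneg fun i _ => rowSq_nonneg A i).lt_of_ne fun h => hA ?_
  have hrows := (Fintype.sum_eq_zero_iff_of_nonneg (rowSq_nonneg A)).mp h.symm
  exact funext fun i => (rowSq_eq_zero_iff A).mp (congrFun hrows i)

variable {A} {π : Fin m → ℝ}

theorem transpose_mul_self_apply_eq_sum_mul_div (hsupp : ∀ i, π i = 0 → A i = 0) (k l : Fin K) :
    (Aᵀ * A) k l = ∑ i, π i * (A i k * A i l / π i) := by
  simp only [mul_apply, transpose_apply]
  refine sum_congr rfl fun i _ => ?_
  by_cases h : π i = 0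
  · simp [h, hsupp i h]
  · field_simp

theorem sketch_transpose_mul_self_apply (hπ : ∀ i, 0 ≤ π i) (f : Fin c → Fin m) (k l : Fin K) :
    ((sketch A π c f)ᵀ * sketch A π c f) k l = (∑ j, A (f j) k * A (f j) l / π (f j)) / c := by
  simp only [mul_apply, transpose_apply, sketch, of_apply, sum_div]
  refine sum_congr rfl fun j _ => ?_
  rw [div_mul_div_comm, Real.mul_self_sqrt (mul_nonneg c.cast_nonneg (hπ (f j)))]
  ring

theorem sum_sum_mul_div_sq (i : Fin m) :
    ∑ k, ∑ l, π i * (A i k * A i l / π i) ^ 2 = rowSq A i ^ 2 / π i := by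
  by_cases h : π i = 0
  · simp [h]
  · simp only [rowSq, sq (∑ j, A i j ^ 2), sum_mul_sum, sum_div]
    refine sum_congr rfl fun k _ => sum_congr rfl fun l _ => ?_
    field_simp

/- Rows with `π i = 0` vanish by `hsupp`, and their term `rowSq A i ^ 2 / π i` is `0` through
the convention `x / 0 = 0`. -/
theorem sum_prod_mul_frobSq_sub_sketch_le (hc : 0 < c) (hπ1 : ∑ i, π i = 1)
    (hπ0 : ∀ i, 0 ≤ π i) (hsupp : ∀ i, π i = 0 → A i = 0) :
    ∑ f : Fin c → Fin m,
        (∏ j, π (f j)) * frobSq (Aᵀ * A - (sketch A π c f)ᵀ * sketch A π c f)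
      ≤ (∑ i, rowSq A i ^ 2 / π i) / c := by
  set Y : Fin K → Fin K → Fin m → ℝ := fun k l i => A i k * A i l / π i
  have hentry : ∀ f k l, (Aᵀ * A - (sketch A π c f)ᵀ * sketch A π c f) k l
      = ∑ i, π i * Y k l i - (∑ j, Y k l (f j)) / c := fun f k l => by
    rw [Matrix.sub_apply, transpose_mul_self_apply_eq_sum_mul_div hsupp,
      sketch_transpose_mul_self_apply hπ0]
  calc ∑ f : Fin c → Fin m,
        (∏ j, π (f j)) * frobSq (Aᵀ * A - (sketch A π c f)ᵀ * sketch A π c f)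
      = ∑ k, ∑ l, ∑ f : Fin c → Fin m,
          (∏ j, π (f j)) * (∑ i, π i * Y k l i - (∑ j, Y k l (f j)) / c) ^ 2 := by
        simp_rw [frobSq, hentry, mul_sum]
        rw [sum_comm]
        exact sum_congr rfl fun _ _ => sum_comm
    _ ≤ ∑ k, ∑ l, (∑ i, π i * Y k l i ^ 2) / c := by
        gcongr with k _ l _
        simpa using sum_prod_mul_sq_sub_mean_le (J := Fin c) (by simpa using hc) hπ1 (Y k l)
    _ = (∑ i, rowSq A i ^ 2 / π i) / c := by
        simp_rw [← sum_div, ← sum_sum_mul_div_sq]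
        congr 1
        conv_rhs => rw [sum_comm]
        exact sum_congr rfl fun _ _ => sum_comm

end RowSampling

/-- Monte Carlo variance reduction for the row-norm sampling sketch:
`E[‖AᵀA − CᵀC‖_F²] ≤ ‖A‖_F⁴ / c`, the expectation taken over i.i.d. draws
`i₁,…,i_c ∼ π` with exact row-norm probabilities `π(i) = ‖A_{i,:}‖₂²/‖A‖_F²`. -/
theorem stmt3 {m K c : ℕ} (hc : 0 < c)
    (A : Matrix (Fin m) (Fin K) ℝ) (hA : A ≠ 0)
    (π : Fin m → ℝ) (hπ : ∀ i, π i = rowSq A i / frobSq A) :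
    ∑ f : Fin c → Fin m,
        (∏ j, π (f j)) * frobSq (Aᵀ * A - (sketch A π c f)ᵀ * (sketch A π c f))
      ≤ (frobSq A) ^ 2 / c := by
  have hF : 0 < frobSq A := frobSq_pos hA
  have hπ1 : ∑ i, π i = 1 := by
    simp_rw [hπ, ← sum_div, ← frobSq_eq_sum_rowSq, div_self hF.ne']
  have hπ0 : ∀ i, 0 ≤ π i := fun i => hπ i ▸ div_nonneg (rowSq_nonneg A i) hF.le
  have hsupp : ∀ i, π i = 0 → A i = 0 := fun i h =>
    (rowSq_eq_zero_iff A).mp <| by simpa [hπ, hF.ne'] using h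
  have hrow : ∀ i, rowSq A i ^ 2 / π i = rowSq A i * frobSq A := fun i => by
    by_cases h : rowSq A i = 0
    · simp [h]
    · rw [hπ]
      field_simp
  calc _ ≤ (∑ i, rowSq A i ^ 2 / π i) / c := sum_prod_mul_frobSq_sub_sketch_le hc hπ1 hπ0 hsupp
    _ = frobSq A ^ 2 / c := by simp_rw [hrow, ← sum_mul, ← frobSq_eq_sum_rowSq, sq]

end
end

section
/- Let A be an m×K matrix, δ ∈ (0,1), β ∈ (0,1], and suppose the row-sampled sketch C of c rows (sampled with probabilities π(i) ≥ β‖A_{i,:}‖₂²/‖A‖_F² and rescaled by 1/√(c·π(i))) satisfies the sketching bound ‖AᵀA − CᵀC‖_F ≤ ((1 + √(8β⁻¹log(1/δ)))/√(βc))·‖A‖_F² with probability at least 1−δ. If additionally λ_min(AᵀA) > ε > 0 and c ≥ ‖A‖_F⁴(1 + √(8β⁻¹log(1/δ)))²/(βε²), then with probability at least 1−δ: λ_min(CᵀC) ≥ λ_min(AᵀA) − ε > 0 and λ_min(CᵀC)/λ_max(CᵀC) ≥ (λ_min(AᵀA)/λ_max(AᵀA))·(λ_min(AᵀA) − ε)/(λ_min(AᵀA)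 + ε). -/
/-!
On the event where the sketching bound holds, the lower bound on `c` forces
`‖AᵀA - CᵀC‖_F ≤ ε`. Since `|xᵀ M x| ≤ ‖M‖_F ‖x‖²` (Cauchy–Schwarz), the Rayleigh-quotient
characterisation of the extreme eigenvalues (obtained from the spectral order:
`t ≤ λ_min(B) ↔ t • 1 ≤ B`) shows that `λ_min` and `λ_max` move by at most `ε` (Weyl).
The bound on the condition number is then elementary algebra.
-/

open Matrix Finset MeasureTheory

noncomputable section

/-- Smallest eigenvalue of a Hermitian (symmetric) matrix; junk value `0` otherwise. -/
def lamMin {K : ℕ} (B : Matrix (Fin K) (Fin K) ℝ) : ℝ :=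
  if h : B.IsHermitian then ⨅ i, h.eigenvalues i else 0

/-- Largest eigenvalue of a Hermitian (symmetric) matrix; junk value `0` otherwise. -/
def lamMax {K : ℕ} (B : Matrix (Fin K) (Fin K) ℝ) : ℝ :=
  if h : B.IsHermitian then ⨆ i, h.eigenvalues i else 0

open scoped MatrixOrder

section QuadraticForm

variable {n : Type*} [Fintype n]

lemma abs_dotProduct_mulVec_le (M : Matrix n n ℝ) (x : n → ℝ) :
    |x ⬝ᵥ M *ᵥ x| ≤ √(frobSq M) * (x ⬝ᵥ x) := by
  have hform : x ⬝ᵥ M *ᵥ x = ∑ p : n × n, M p.1 p.2 * (x p.1 * x p.2) := by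
    simp only [Fintype.sum_prod_type, dotProduct, mulVec, Finset.mul_sum]
    exact Finset.sum_congr rfl fun i _ => Finset.sum_congr rfl fun j _ => by ring
  have hM : ∑ p : n × n, M p.1 p.2 ^ 2 = frobSq M := Fintype.sum_prod_type _
  have hx : ∑ p : n × n, (x p.1 * x p.2) ^ 2 = (x ⬝ᵥ x) ^ 2 := by
    simp only [Fintype.sum_prod_type, mul_pow, ← Finset.mul_sum, ← Finset.sum_mul, dotProduct,
      ← sq]
  have hcs : (x ⬝ᵥ M *ᵥ x) ^ 2 ≤ frobSq M * (x ⬝ᵥ x) ^ 2 := by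
    rw [hform, ← hM, ← hx]
    exact Finset.sum_mul_sq_le_sq_mul_sq _ _ _
  have hxx : 0 ≤ x ⬝ᵥ x := by simpa using dotProduct_star_self_nonneg x
  calc |x ⬝ᵥ M *ᵥ x| ≤ √(frobSq M * (x ⬝ᵥ x) ^ 2) := Real.abs_le_sqrt hcs
    _ = √(frobSq M) * (x ⬝ᵥ x) := by rw [Real.sqrt_mul' _ (sq_nonneg _), Real.sqrt_sq hxx]

variable [DecidableEq n] {B : Matrix n n ℝ}

lemma Matrix.IsHermitian.algebraMap_le_iff (hB : B.IsHermitian) {t : ℝ} :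
    algebraMap ℝ _ t ≤ B ↔ ∀ x, t * (x ⬝ᵥ x) ≤ x ⬝ᵥ B *ᵥ x := by
  rw [Matrix.le_iff, posSemidef_iff_dotProduct_mulVec, Algebra.algebraMap_eq_smul_one,
    and_iff_right (hB.sub (isHermitian_one.smul (.all t)))]
  simp only [star_trivial, sub_mulVec, smul_mulVec, one_mulVec,
    dotProduct_sub, dotProduct_smul, smul_eq_mul, sub_nonneg]

lemma Matrix.IsHermitian.le_algebraMap_iff (hB : B.IsHermitian) {t : ℝ} :
    B ≤ algebraMap ℝ _ t ↔ ∀ x, x ⬝ᵥ B *ᵥ x ≤ t * (x ⬝ᵥ x) := by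
  rw [Matrix.le_iff, posSemidef_iff_dotProduct_mulVec, Algebra.algebraMap_eq_smul_one,
    and_iff_right ((isHermitian_one.smul (.all t)).sub hB)]
  simp only [star_trivial, sub_mulVec, smul_mulVec, one_mulVec,
    dotProduct_sub, dotProduct_smul, smul_eq_mul, sub_nonneg]

end QuadraticForm

section ExtremeEigenvalues

variable {K : ℕ} {B S T : Matrix (Fin K) (Fin K) ℝ}

lemma lamMin_of_fin_zero (B : Matrix (Fin 0) (Fin 0) ℝ) : lamMin B = 0 := by
  unfold lamMin
  split_ifs
  · exact Real.iInf_of_isEmpty _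
  · rfl

lemma Matrix.IsHermitian.lamMin_le_lamMax [NeZero K] (hB : B.IsHermitian) :
    lamMin B ≤ lamMax B := by
  rw [lamMin, lamMax, dif_pos hB, dif_pos hB]
  exact (ciInf_le (Set.finite_range _).bddBelow 0).trans
    (le_ciSup (Set.finite_range _).bddAbove 0)

lemma Matrix.IsHermitian.le_lamMin_iff [NeZero K] (hB : B.IsHermitian) {t : ℝ} :
    t ≤ lamMin B ↔ ∀ x, t * (x ⬝ᵥ x) ≤ x ⬝ᵥ B *ᵥ x := by
  rw [← hB.algebraMap_le_iff, algebraMap_le_iff_le_spectrum hB.isSelfAdjoint,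
    hB.spectrum_real_eq_range_eigenvalues, Set.forall_mem_range, lamMin, dif_pos hB,
    le_ciInf_iff (Set.finite_range _).bddBelow]

lemma Matrix.IsHermitian.lamMax_le_iff [NeZero K] (hB : B.IsHermitian) {t : ℝ} :
    lamMax B ≤ t ↔ ∀ x, x ⬝ᵥ B *ᵥ x ≤ t * (x ⬝ᵥ x) := by
  rw [← hB.le_algebraMap_iff, le_algebraMap_iff_spectrum_le hB.isSelfAdjoint,
    hB.spectrum_real_eq_range_eigenvalues, Set.forall_mem_range, lamMax, dif_pos hB,
    ciSup_le_iff (Set.finite_range _).bddAbove]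

lemma Matrix.IsHermitian.lamMin_sub_le_lamMin [NeZero K] (hS : S.IsHermitian)
    (hT : T.IsHermitian) :
    lamMin T - √(frobSq (T - S)) ≤ lamMin S := by
  refine hS.le_lamMin_iff.2 fun x => ?_
  have hTx := hT.le_lamMin_iff.1 le_rfl x
  have hdiff := abs_le.1 (abs_dotProduct_mulVec_le (T - S) x)
  rw [sub_mulVec, dotProduct_sub] at hdiff
  linarith [sub_mul (lamMin T) √(frobSq (T - S)) (x ⬝ᵥ x)]

lemma Matrix.IsHermitian.lamMax_le_lamMax_add [NeZero K] (hS : S.IsHermitian)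
    (hT : T.IsHermitian) :
    lamMax S ≤ lamMax T + √(frobSq (T - S)) := by
  refine hS.lamMax_le_iff.2 fun x => ?_
  have hTx := hT.lamMax_le_iff.1 le_rfl x
  have hdiff := abs_le.1 (abs_dotProduct_mulVec_le (T - S) x)
  rw [sub_mulVec, dotProduct_sub] at hdiff
  linarith [add_mul (lamMax T) √(frobSq (T - S)) (x ⬝ᵥ x)]

end ExtremeEigenvalues

lemma div_sqrt_mul_le_of_sq_div_le {F s β c ε : ℝ} (hβ : 0 < β) (hε : 0 < ε)
    (hc : F ^ 2 * s ^ 2 / (β * ε ^ 2) ≤ c) : s / √(β * c) * F ≤ ε := by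
  rcases le_or_gt (β * c) 0 with hβc | hβc
  · rw [Real.sqrt_eq_zero'.2 hβc, div_zero, zero_mul]
    exact hε.le
  rw [div_mul_eq_mul_div, div_le_iff₀ (Real.sqrt_pos.2 hβc)]
  have hsq : (s * F) ^ 2 ≤ (ε * √(β * c)) ^ 2 := by
    rw [div_le_iff₀ (by positivity)] at hc
    rw [mul_pow, mul_pow ε, Real.sq_sqrt hβc.le]
    nlinarith
  exact abs_le_of_sq_le_sq' hsq (by positivity) |>.2

lemma div_mul_sub_div_add_le_div {a b a' b' ε : ℝ} (hε : 0 < ε) (hεa : ε < a) (hab : a ≤ b)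
    (ha' : a - ε ≤ a') (ha'b' : a' ≤ b') (hb' : b' ≤ b + ε) :
    a / b * ((a - ε) / (a + ε)) ≤ a' / b' := by
  have hb : 0 < b := by linarith
  calc a / b * ((a - ε) / (a + ε)) ≤ (a - ε) / (b + ε) := by
        rw [div_mul_div_comm, div_le_div_iff₀ (by nlinarith) (by linarith)]
        nlinarith [mul_nonneg (mul_nonneg (sub_pos.2 hεa).le hε.le) (sub_nonneg.2 hab)]
    _ ≤ a' / b' := div_le_div₀ (by linarith) ha' (by linarith) hb'

theorem stmt6_general {m K c : ℕ}
    (A : Matrix (Fin m) (Fin K) ℝ)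
    {Ω : Type*} [MeasurableSpace Ω] (μ : Measure Ω) [IsProbabilityMeasure μ]
    (δ β ε : ℝ) (hβ : β ∈ Set.Ioc (0 : ℝ) 1)
    (C : Ω → Matrix (Fin c) (Fin K) ℝ)
    (hsketch : ENNReal.ofReal (1 - δ) ≤
      μ {ω | Real.sqrt (frobSq (Aᵀ * A - (C ω)ᵀ * C ω)) ≤
        (1 + Real.sqrt (8 * β⁻¹ * Real.log δ⁻¹)) / Real.sqrt (β * c) * frobSq A})
    (hε : 0 < ε) (hεlt : ε < lamMin (Aᵀ * A))
    (hc : (frobSq A) ^ 2 * (1 + Real.sqrt (8 * β⁻¹ * Real.log δ⁻¹)) ^ 2 / (β * ε ^ 2)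
      ≤ (c : ℝ)) :
    ENNReal.ofReal (1 - δ) ≤
      μ {ω | lamMin (Aᵀ * A) - ε ≤ lamMin ((C ω)ᵀ * C ω) ∧
        0 < lamMin ((C ω)ᵀ * C ω) ∧
        lamMin (Aᵀ * A) / lamMax (Aᵀ * A) *
            ((lamMin (Aᵀ * A) - ε) / (lamMin (Aᵀ * A) + ε))
          ≤ lamMin ((C ω)ᵀ * C ω) / lamMax ((C ω)ᵀ * C ω)} := by
  have : NeZero K := ⟨by rintro rfl; linarith [lamMin_of_fin_zero (Aᵀ * A)]⟩
  have hT : (Aᵀ * A).IsHermitian := by simpa using isHermitian_conjTranspose_mul_self A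
  have hbound := div_sqrt_mul_le_of_sq_div_le hβ.1 hε hc
  refine hsketch.trans (measure_mono fun ω hω => ?_)
  have hS : ((C ω)ᵀ * C ω).IsHermitian := by
    simpa using isHermitian_conjTranspose_mul_self (C ω)
  have hdist : √(frobSq (Aᵀ * A - (C ω)ᵀ * C ω)) ≤ ε := le_trans hω hbound
  have hmin := hS.lamMin_sub_le_lamMin hT
  have hmax := hS.lamMax_le_lamMax_add hT
  have hshift : lamMin (Aᵀ * A) - ε ≤ lamMin ((C ω)ᵀ * C ω) := by linarith
  exact ⟨hshift, by linarith, div_mul_sub_div_add_le_div hε hεlt hT.lamMin_le_lamMax hshift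
    hS.lamMin_le_lamMax (by linarith)⟩

/-- Main sampling-design theorem, finite-matrix form: if the row-sampled, rescaled
sketch `C` satisfies the randomized-linear-algebra bound
`‖AᵀA − CᵀC‖_F ≤ ((1 + √(8 β⁻¹ log δ⁻¹))/√(β c)) ‖A‖_F²` with probability `≥ 1 − δ`,
`λ_min(AᵀA) > ε > 0`, and `c ≥ ‖A‖_F⁴ (1 + √(8 β⁻¹ log δ⁻¹))² / (β ε²)`, then with
probability `≥ 1 − δ` the sketch satisfies
`λ_min(CᵀC) ≥ λ_min(AᵀA) − ε > 0` and
`λ_min(CᵀC)/λ_max(CᵀC) ≥ (λ_min(AᵀA)/λ_max(AᵀA)) ⬝ (λ_min(AᵀA) − ε)/(λ_min(AᵀA) + ε)`. -/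
theorem stmt6 {m K c : ℕ}
    (A : Matrix (Fin m) (Fin K) ℝ)
    {Ω : Type*} [MeasurableSpace Ω] (μ : Measure Ω) [IsProbabilityMeasure μ]
    (δ β ε : ℝ) (hδ : δ ∈ Set.Ioo (0 : ℝ) 1) (hβ : β ∈ Set.Ioc (0 : ℝ) 1)
    (π : Fin m → ℝ) (hπnn : ∀ i, 0 ≤ π i) (hπsum : ∑ i, π i = 1)
    (hdom : ∀ i, β * rowSq A i / frobSq A ≤ π i)
    (C : Ω → Matrix (Fin c) (Fin K) ℝ)
    (hform : ∀ ω, ∃ f : Fin c → Fin m, C ω = sketch A π c f)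
    (hsketch : ENNReal.ofReal (1 - δ) ≤
      μ {ω | Real.sqrt (frobSq (Aᵀ * A - (C ω)ᵀ * C ω)) ≤
        (1 + Real.sqrt (8 * β⁻¹ * Real.log δ⁻¹)) / Real.sqrt (β * c) * frobSq A})
    (hε : 0 < ε) (hεlt : ε < lamMin (Aᵀ * A))
    (hc : (frobSq A) ^ 2 * (1 + Real.sqrt (8 * β⁻¹ * Real.log δ⁻¹)) ^ 2 / (β * ε ^ 2)
      ≤ (c : ℝ)) :
    ENNReal.ofReal (1 - δ) ≤
      μ {ω | lamMin (Aᵀ * A) - ε ≤ lamMin ((C ω)ᵀ * C ω) ∧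
        0 < lamMin ((C ω)ᵀ * C ω) ∧
        lamMin (Aᵀ * A) / lamMax (Aᵀ * A) *
            ((lamMin (Aᵀ * A) - ε) / (lamMin (Aᵀ * A) + ε))
          ≤ lamMin ((C ω)ᵀ * C ω) / lamMax ((C ω)ᵀ * C ω)} :=
  stmt6_general A μ δ β ε hβ C hsketch hε hεlt hc

end
end
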